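/- As x → ∞, the ratio of ∫₀^∞ e^{-(x+y)²/2} y² dy to (2/x³) e^{-x²/2} tends to 1. -/

import Mathlib

/-!
Factor `exp (-(x + y) ^ 2 / 2) = exp (-x ^ 2 / 2) * exp (-x * y) * exp (-y ^ 2 / 2)` and squeeze the
last factor between `1 - y ^ 2 / 2` and `1`. What remains are Laplace transforms of monomials,
`∫₀^∞ y ^ k * exp (-x * y) dy = k! / x ^ (k + 1)`, so the `n`-th moment `∫₀^∞ exp (-(x + y) ^ 2 / 2) * y ^ n dy`
lies between `(1 - (n + 1) * (n + 2) / (2 * x ^ 2))` times and exactly `n! / x ^ (n + 1) * exp (-x ^ 2 / 2)`.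
-/

open MeasureTheory Real Filter Set
open scoped Nat

lemma integral_pow_mul_exp_neg_mul_Ioi {b : ℝ} (hb : 0 < b) (n : ℕ) :
    ∫ y in Ioi (0 : ℝ), y ^ n * exp (-(b * y)) = n ! / b ^ (n + 1) := by
  have h := integral_rpow_mul_exp_neg_mul_Ioi (a := n + 1) (by positivity) hb
  rw [Gamma_nat_eq_factorial, add_sub_cancel_right, ← Nat.cast_add_one, one_div,
    inv_rpow hb.le, rpow_natCast] at h
  simp only [rpow_natCast] at h
  rw [div_eq_inv_mul, ← h]

lemma integrableOn_pow_mul_exp_neg_mul_Ioi {b : ℝ} (hb : 0 < b) (n : ℕ) :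
    IntegrableOn (fun y => y ^ n * exp (-(b * y))) (Ioi 0) :=
  .of_integral_ne_zero (by rw [integral_pow_mul_exp_neg_mul_Ioi hb]; positivity)

lemma exp_neg_add_sq_div_two (x y : ℝ) :
    exp (-(x + y) ^ 2 / 2) = exp (-x ^ 2 / 2) * exp (-(x * y)) * exp (-y ^ 2 / 2) := by
  rw [← exp_add, ← exp_add]; ring_nf

lemma exp_neg_add_sq_div_two_mul_pow_le (x : ℝ) {y : ℝ} (hy : 0 ≤ y) (n : ℕ) :
    exp (-(x + y) ^ 2 / 2) * y ^ n ≤ exp (-x ^ 2 / 2) * (y ^ n * exp (-(x * y))) := by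
  have : exp (-y ^ 2 / 2) ≤ 1 := exp_le_one_iff.2 (by nlinarith [sq_nonneg y])
  rw [exp_neg_add_sq_div_two]
  calc _ ≤ exp (-x ^ 2 / 2) * exp (-(x * y)) * 1 * y ^ n := by gcongr
    _ = _ := by ring

lemma le_exp_neg_add_sq_div_two (x y : ℝ) :
    exp (-x ^ 2 / 2) * exp (-(x * y)) * (1 - y ^ 2 / 2) ≤ exp (-(x + y) ^ 2 / 2) := by
  rw [exp_neg_add_sq_div_two]
  gcongr
  linarith [add_one_le_exp (-y ^ 2 / 2)]

noncomputable def gaussianTailMoment (n : ℕ) (x : ℝ) : ℝ :=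
  ∫ y in Ioi (0 : ℝ), exp (-(x + y) ^ 2 / 2) * y ^ n

lemma integrableOn_gaussianTailMoment {x : ℝ} (hx : 0 < x) (n : ℕ) :
    IntegrableOn (fun y => exp (-(x + y) ^ 2 / 2) * y ^ n) (Ioi 0) := by
  refine ((integrableOn_pow_mul_exp_neg_mul_Ioi hx n).const_mul (exp (-x ^ 2 / 2))).mono'
    (by fun_prop) ?_
  filter_upwards [ae_restrict_mem measurableSet_Ioi] with y hy
  rw [norm_of_nonneg (mul_nonneg (exp_pos _).le (pow_nonneg (le_of_lt hy) n))]
  exact exp_neg_add_sq_div_two_mul_pow_le x (le_of_lt hy) n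

lemma gaussianTailMoment_le {x : ℝ} (hx : 0 < x) (n : ℕ) :
    gaussianTailMoment n x ≤ n ! / x ^ (n + 1) * exp (-x ^ 2 / 2) := by
  calc gaussianTailMoment n x
      ≤ ∫ y in Ioi (0 : ℝ), exp (-x ^ 2 / 2) * (y ^ n * exp (-(x * y))) := by
        refine setIntegral_mono_on (integrableOn_gaussianTailMoment hx n)
          ((integrableOn_pow_mul_exp_neg_mul_Ioi hx n).const_mul _) measurableSet_Ioi
          fun y hy => exp_neg_add_sq_div_two_mul_pow_le x (le_of_lt hy) n
    _ = n ! / x ^ (n + 1) * exp (-x ^ 2 / 2) := by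
        rw [integral_const_mul, integral_pow_mul_exp_neg_mul_Ioi hx, mul_comm]

lemma le_gaussianTailMoment {x : ℝ} (hx : 0 < x) (n : ℕ) :
    (n ! / x ^ (n + 1) - (n + 2)! / (2 * x ^ (n + 3))) * exp (-x ^ 2 / 2)
      ≤ gaussianTailMoment n x := by
  have hn := integrableOn_pow_mul_exp_neg_mul_Ioi hx n
  have hn2 := (integrableOn_pow_mul_exp_neg_mul_Ioi hx (n + 2)).const_mul (1 / 2)
  calc (n ! / x ^ (n + 1) - (n + 2)! / (2 * x ^ (n + 3))) * exp (-x ^ 2 / 2)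
      = ∫ y in Ioi (0 : ℝ), exp (-x ^ 2 / 2) *
          (y ^ n * exp (-(x * y)) - 1 / 2 * (y ^ (n + 2) * exp (-(x * y)))) := by
        rw [integral_const_mul, integral_sub hn hn2, integral_const_mul,
          integral_pow_mul_exp_neg_mul_Ioi hx, integral_pow_mul_exp_neg_mul_Ioi hx]
        ring
    _ ≤ gaussianTailMoment n x := by
        refine setIntegral_mono_on ((hn.sub hn2).const_mul _)
          (integrableOn_gaussianTailMoment hx n) measurableSet_Ioi fun y hy => ?_
        have := le_exp_neg_add_sq_div_two x y
        calc _ = exp (-x ^ 2 / 2) * exp (-(x * y)) * (1 - y ^ 2 / 2) * y ^ n := by ring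
          _ ≤ _ := by gcongr; exact pow_nonneg (le_of_lt hy) n

theorem tendsto_gaussianTailMoment_div (n : ℕ) :
    Tendsto (fun x => gaussianTailMoment n x / (n ! / x ^ (n + 1) * exp (-x ^ 2 / 2)))
      atTop (nhds 1) := by
  set c : ℝ := (n + 1) * (n + 2) / 2
  have hc : Tendsto (fun x : ℝ => 1 - c / x ^ 2) atTop (nhds 1) := by
    have : Tendsto (fun x : ℝ => c / x ^ 2) atTop (nhds 0) :=
      tendsto_const_nhds.div_atTop (tendsto_pow_atTop two_ne_zero)
    simpa using tendsto_const_nhds.sub this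
  have hpos : ∀ᶠ x : ℝ in atTop, 0 < n ! / x ^ (n + 1) * exp (-x ^ 2 / 2) := by
    filter_upwards [eventually_gt_atTop 0] with x hx
    positivity
  refine tendsto_of_tendsto_of_tendsto_of_le_of_le' hc tendsto_const_nhds ?_ ?_ <;>
    filter_upwards [eventually_gt_atTop 0, hpos] with x hx hpos
  · rw [le_div_iff₀ hpos]
    refine le_of_eq_of_le ?_ (le_gaussianTailMoment hx n)
    simp only [c, Nat.factorial_succ, Nat.cast_mul]
    push_cast
    field_simp
    ring
  · rw [div_le_one hpos]
    exact gaussianTailMoment_le hx n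

theorem stmt_6 :
    Tendsto (fun x : ℝ =>
        (∫ y in Set.Ioi (0 : ℝ), Real.exp (-(x + y) ^ 2 / 2) * y ^ 2) /
          (2 / x ^ 3 * Real.exp (-x ^ 2 / 2)))
      atTop (nhds 1) := by
  simpa [gaussianTailMoment] using tendsto_gaussianTailMoment_div 2
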